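/- arXiv:1811.01244 — 2 statements merged into one kernel-verified Lean document; each statement's English description precedes it below -/
import Mathlib

section
/- In the setting of the resolvent family S(t)v = Σₙ s(t,λₙ)(v,eₙ)eₙ with s(t,μ)(1 + μ(1*l)(t)) ≤ 1, one has ‖A S(t) v‖ ≤ ‖v‖ / (1*l)(t) for all t > 0 and v ∈ H, where A v = Σₙ λₙ (v,eₙ)eₙ and (1*l)(t) = ∫₀ᵗ l(τ)dτ > 0. -/
open MeasureTheory intervalIntegral
open scoped RealInnerProductSpace ENNReal

theorem resolvent_family_A_smoothing
    {H : Type*} [NormedAddCommGroup H] [InnerProductSpace ℝ H]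
    (e : HilbertBasis ℕ ℝ H)
    (lam : ℕ → ℝ) (hlam_pos : ∀ n, 0 < lam n) (hlam_mono : Monotone lam)
    (s : ℝ → ℝ → ℝ)
    (L : ℝ → ℝ)  -- L t = (1*l)(t) = ∫₀ᵗ l
    (hL_pos : ∀ t > (0:ℝ), 0 < L t)
    (hs_nonneg : ∀ t ≥ (0:ℝ), ∀ μ > (0:ℝ), 0 ≤ s t μ)
    (hs_bound : ∀ t ≥ (0:ℝ), ∀ μ > (0:ℝ), s t μ * (1 + μ * L t) ≤ 1) :
    ∀ t > (0:ℝ), ∀ v : H,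
      ‖∑' n, (lam n * s t (lam n)) • (⟪e n, v⟫ • (e n : H))‖ ≤ ‖v‖ / L t := by
  intro t ht v
  have hLt := hL_pos t ht
  set C : ℝ := (L t)⁻¹ with hC
  have hC0 : 0 ≤ C := inv_nonneg.2 hLt.le
  set c : ℕ → ℝ := fun n => lam n * s t (lam n) with hc
  -- key scalar bound : 0 ≤ c n ≤ C
  have hc_nonneg : ∀ n, 0 ≤ c n := fun n =>
    mul_nonneg (hlam_pos n).le (hs_nonneg t ht.le _ (hlam_pos n))
  have hc_le : ∀ n, c n ≤ C := by
    intro n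
    have h1 : s t (lam n) * (1 + lam n * L t) ≤ 1 := hs_bound t ht.le _ (hlam_pos n)
    have hs0 : 0 ≤ s t (lam n) := hs_nonneg t ht.le _ (hlam_pos n)
    -- c n * L t ≤ s t (lam n) * (1 + lam n * L t) ≤ 1
    have h2 : c n * L t ≤ 1 := by
      calc c n * L t = s t (lam n) * (lam n * L t) := by ring
        _ ≤ s t (lam n) * (1 + lam n * L t) := by nlinarith
        _ ≤ 1 := h1
    rw [hC, ← one_div]
    exact (le_div_iff₀ hLt).2 h2
  set g : lp (fun _ : ℕ => ℝ) 2 := e.repr v with hg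
  have hgv : ∀ n, g n = ⟪e n, v⟫ := fun n => e.repr_apply_apply v n
  -- membership of the scaled sequence
  have hmem : Memℓp (fun n => c n * g n) 2 := by
    apply memℓp_gen
    have hsum : Summable fun n => C ^ (2:ℝ≥0∞).toReal * ‖g n‖ ^ (2:ℝ≥0∞).toReal :=
      ((lp.memℓp g).summable (by norm_num)).mul_left _
    refine Summable.of_nonneg_of_le (fun n => by positivity) (fun n => ?_) hsum
    have : ‖c n * g n‖ ≤ C * ‖g n‖ := by
      rw [norm_mul]
      exact mul_le_mul_of_nonneg_right (by
        rw [Real.norm_eq_abs, abs_of_nonneg (hc_nonneg n)]; exact hc_le n) (norm_nonneg _)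
    calc ‖c n * g n‖ ^ (2:ℝ≥0∞).toReal ≤ (C * ‖g n‖) ^ (2:ℝ≥0∞).toReal := by
          apply Real.rpow_le_rpow (norm_nonneg _) this; norm_num
      _ = C ^ (2:ℝ≥0∞).toReal * ‖g n‖ ^ (2:ℝ≥0∞).toReal :=
          Real.mul_rpow hC0 (norm_nonneg _)
  set F : lp (fun _ : ℕ => ℝ) 2 := ⟨fun n => c n * g n, hmem⟩ with hF
  have hFn : ∀ n, F n = c n * g n := fun _ => rfl
  -- identify the tsum
  have hsum : HasSum (fun n => (lam n * s t (lam n)) • (⟪e n, v⟫ • (e n : H)))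
      (e.repr.symm F) := by
    have := e.hasSum_repr_symm F
    convert this using 2 with n
    rw [hFn, ← hgv, smul_smul]
  rw [hsum.tsum_eq]
  have hnorm : ‖e.repr.symm F‖ = ‖F‖ := e.repr.symm.norm_map F
  rw [hnorm]
  -- bound the lp norm
  have hFle : ‖F‖ ≤ C * ‖v‖ := by
    have hgn : ‖g‖ = ‖v‖ := e.repr.norm_map v
    apply lp.norm_le_of_forall_sum_le (by norm_num) (by positivity)
    intro sFin
    calc ∑ i ∈ sFin, ‖F i‖ ^ (2:ℝ≥0∞).toReal
        ≤ ∑ i ∈ sFin, C ^ (2:ℝ≥0∞).toReal * ‖g i‖ ^ (2:ℝ≥0∞).toReal := by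
          apply Finset.sum_le_sum
          intro i _
          rw [← Real.mul_rpow hC0 (norm_nonneg _)]
          apply Real.rpow_le_rpow (norm_nonneg _) _ (by norm_num)
          rw [hFn, norm_mul]
          exact mul_le_mul_of_nonneg_right (by
            rw [Real.norm_eq_abs, abs_of_nonneg (hc_nonneg i)]; exact hc_le i) (norm_nonneg _)
      _ = C ^ (2:ℝ≥0∞).toReal * ∑ i ∈ sFin, ‖g i‖ ^ (2:ℝ≥0∞).toReal := by
          rw [Finset.mul_sum]
      _ ≤ C ^ (2:ℝ≥0∞).toReal * ‖g‖ ^ (2:ℝ≥0∞).toReal := by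
          apply mul_le_mul_of_nonneg_left (lp.sum_rpow_le_norm_rpow (by norm_num) g sFin)
          positivity
      _ = (C * ‖v‖) ^ (2:ℝ≥0∞).toReal := by
          rw [hgn, Real.mul_rpow hC0 (norm_nonneg _)]
  calc ‖F‖ ≤ C * ‖v‖ := hFle
    _ = ‖v‖ / L t := by rw [hC]; field_simp
end

section
/- Let μ ≥ 0 and 0 < α < β < 1, and set l̂(λ) = (λ^{1-α} + μ λ^{1-β})^{-1} for Re λ > 0. Then |λ l̂'(λ)| ≤ |l̂(λ)| and |λ² l̂''(λ)| ≤ 3 |l̂(λ)| for all Re λ > 0; i.e., l is 2-regular. -/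
/-!
Write `l̂ = g⁻¹` with `g λ = λ^{1-α} + μ λ^{1-β}`. Then `λ l̂' = -(λ g') / g²` and
`λ² l̂'' = -(λ² g'') / g² + 2 (λ g')² / g³`, so it suffices that `|λ g'| ≤ |g|` and
`|λ² g''| ≤ |g|`. Both `λ g'` and `λ² g''` are combinations `c₁ u + c₂ v` of `u = λ^{1-α}` and
`v = μ λ^{1-β}` with real coefficients of one sign and modulus at most `1`. Since `u` and `v`
make the angle `(β - α) arg λ`, of modulus less than `π/2`, we have `Re (u v̄) ≥ 0`, and then
`|c₁ u + c₂ v|² = c₁²|u|² + c₂²|v|² + 2 c₁ c₂ Re (u v̄) ≤ |u + v|²`.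
-/

open Complex Filter Topology ComplexConjugate

theorem Complex.norm_ofReal_mul_add_ofReal_mul_le {u v : ℂ} (huv : 0 ≤ (u * conj v).re)
    {c₁ c₂ : ℝ} (hc₁ : |c₁| ≤ 1) (hc₂ : |c₂| ≤ 1) (hc : 0 ≤ c₁ * c₂) :
    ‖(c₁ : ℂ) * u + c₂ * v‖ ≤ ‖u + v‖ := by
  rw [norm_def, norm_def]
  apply Real.sqrt_le_sqrt
  have hconj : c₁ * u * conj (c₂ * v) = ((c₁ * c₂ : ℝ) : ℂ) * (u * conj v) := by
    simp only [map_mul, conj_ofReal, ofReal_mul]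
    ring
  rw [normSq_add, normSq_add, hconj, re_ofReal_mul, normSq_mul, normSq_mul, normSq_ofReal,
    normSq_ofReal]
  have hc₁' : c₁ * c₁ ≤ 1 := by nlinarith [abs_mul_abs_self c₁, abs_nonneg c₁]
  have hc₂' : c₂ * c₂ ≤ 1 := by nlinarith [abs_mul_abs_self c₂, abs_nonneg c₂]
  have hc' : c₁ * c₂ ≤ 1 := by
    have := mul_le_one₀ hc₁ (abs_nonneg c₂) hc₂
    rwa [← abs_mul, abs_of_nonneg hc] at this
  nlinarith [normSq_nonneg u, normSq_nonneg v]

theorem Complex.re_cpow_mul_conj_cpow_nonneg {z : ℂ} (hz : 0 < z.re) {a b : ℝ}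
    (hab : |a - b| ≤ 1) : 0 ≤ (z ^ (a : ℂ) * conj (z ^ (b : ℂ))).re := by
  have hre : (z ^ (a : ℂ) * conj (z ^ (b : ℂ))).re
      = ‖z‖ ^ a * ‖z‖ ^ b * Real.cos (arg z * a - arg z * b) := by
    rw [mul_re, conj_re, conj_im, cpow_ofReal_re, cpow_ofReal_im, cpow_ofReal_re,
      cpow_ofReal_im, Real.cos_sub]
    ring
  have hangle : |arg z * a - arg z * b| ≤ Real.pi / 2 := by
    rw [← mul_sub, abs_mul, ← mul_one (Real.pi / 2)]
    exact mul_le_mul (abs_arg_lt_pi_div_two_iff.2 (Or.inl hz)).le hab (abs_nonneg _)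
      (by positivity)
  rw [hre]
  have := Real.cos_nonneg_of_mem_Icc (abs_le.1 hangle)
  positivity

theorem Complex.mul_cpow_sub_one {z : ℂ} (hz : z ≠ 0) (c : ℂ) : z * z ^ (c - 1) = z ^ c := by
  rw [cpow_sub _ _ hz, cpow_one, mul_div_cancel₀ _ hz]

section InverseRegular

variable {𝕜 : Type*} [RCLike 𝕜] {g g₁ : 𝕜 → 𝕜} {g' g₂ z : 𝕜}

theorem norm_mul_deriv_inv_le (hg : HasDerivAt g g' z) (hgz : g z ≠ 0)
    (h : ‖z * g'‖ ≤ ‖g z‖) : ‖z * deriv (fun w => (g w)⁻¹) z‖ ≤ ‖(g z)⁻¹‖ := by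
  have hG : 0 < ‖g z‖ := norm_pos_iff.2 hgz
  rw [(hg.fun_inv hgz).deriv, mul_div_assoc', mul_neg, neg_div, norm_neg, norm_div, norm_pow,
    norm_inv]
  calc ‖z * g'‖ / ‖g z‖ ^ 2 ≤ ‖g z‖ / ‖g z‖ ^ 2 := by gcongr
    _ = ‖g z‖⁻¹ := by field_simp

theorem norm_sq_mul_deriv_deriv_inv_le (hg : ∀ᶠ w in 𝓝 z, HasDerivAt g (g₁ w) w ∧ g w ≠ 0)
    (hg₁ : HasDerivAt g₁ g₂ z) (h₁ : ‖z * g₁ z‖ ≤ ‖g z‖) (h₂ : ‖z ^ 2 * g₂‖ ≤ ‖g z‖) :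
    ‖z ^ 2 * deriv (deriv fun w => (g w)⁻¹) z‖ ≤ 3 * ‖(g z)⁻¹‖ := by
  obtain ⟨hgd, hgz⟩ := hg.self_of_nhds
  have hG : 0 < ‖g z‖ := norm_pos_iff.2 hgz
  have hderiv : deriv (fun w => (g w)⁻¹) =ᶠ[𝓝 z] fun w => -g₁ w / g w ^ 2 :=
    hg.mono fun w hw => (hw.1.fun_inv hw.2).deriv
  have hsplit : z ^ 2 * deriv (deriv fun w => (g w)⁻¹) z
      = -(z ^ 2 * g₂ / g z ^ 2) + 2 * (z * g₁ z) ^ 2 / g z ^ 3 := by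
    rw [hderiv.deriv_eq, (hg₁.fun_neg.fun_div (hgd.fun_pow 2) (pow_ne_zero 2 hgz)).deriv]
    field_simp
    ring
  have hfirst : ‖z ^ 2 * g₂ / g z ^ 2‖ ≤ ‖g z‖⁻¹ := by
    rw [norm_div, norm_pow]
    calc ‖z ^ 2 * g₂‖ / ‖g z‖ ^ 2 ≤ ‖g z‖ / ‖g z‖ ^ 2 := by gcongr
      _ = ‖g z‖⁻¹ := by field_simp
  have hsecond : ‖2 * (z * g₁ z) ^ 2 / g z ^ 3‖ ≤ 2 * ‖g z‖⁻¹ := by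
    rw [norm_div, norm_mul, norm_pow, norm_pow, RCLike.norm_two]
    calc 2 * ‖z * g₁ z‖ ^ 2 / ‖g z‖ ^ 3 ≤ 2 * ‖g z‖ ^ 2 / ‖g z‖ ^ 3 := by gcongr
      _ = 2 * ‖g z‖⁻¹ := by field_simp
  rw [hsplit, norm_inv]
  calc ‖-(z ^ 2 * g₂ / g z ^ 2) + 2 * (z * g₁ z) ^ 2 / g z ^ 3‖
      ≤ ‖z ^ 2 * g₂ / g z ^ 2‖ + ‖2 * (z * g₁ z) ^ 2 / g z ^ 3‖ := norm_add_le_of_le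
        (norm_neg _).le le_rfl
    _ ≤ 3 * ‖g z‖⁻¹ := by linarith

end InverseRegular

/-- The paper's `l̂` is `(kernelSymbol μ (1 - α) (1 - β))⁻¹`. -/
noncomputable def kernelSymbol (μ a b : ℝ) (w : ℂ) : ℂ := w ^ (a : ℂ) + μ * w ^ (b : ℂ)

section KernelSymbol

variable {μ a b : ℝ} {z : ℂ}

theorem norm_mul_cpow_add_mul_cpow_le_norm_kernelSymbol (hμ : 0 ≤ μ) (hab : |a - b| ≤ 1)
    (hz : 0 < z.re) {c₁ c₂ : ℝ} (hc₁ : |c₁| ≤ 1) (hc₂ : |c₂| ≤ 1) (hc : 0 ≤ c₁ * c₂) :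
    ‖(c₁ : ℂ) * z ^ (a : ℂ) + c₂ * (μ * z ^ (b : ℂ))‖ ≤ ‖kernelSymbol μ a b z‖ := by
  refine norm_ofReal_mul_add_ofReal_mul_le ?_ hc₁ hc₂ hc
  rw [map_mul, conj_ofReal, mul_left_comm, re_ofReal_mul]
  exact mul_nonneg hμ (re_cpow_mul_conj_cpow_nonneg hz hab)

theorem kernelSymbol_ne_zero (hμ : 0 ≤ μ) (hab : |a - b| ≤ 1) (hz : 0 < z.re) :
    kernelSymbol μ a b z ≠ 0 := by
  have hz0 : z ≠ 0 := fun h => by simp [h] at hz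
  have := norm_mul_cpow_add_mul_cpow_le_norm_kernelSymbol hμ hab hz (c₁ := 1) (c₂ := 0)
    (by simp) (by simp) (by simp)
  rw [← norm_pos_iff]
  refine lt_of_lt_of_le ?_ this
  simpa using Real.rpow_pos_of_pos (norm_pos_iff.2 hz0) a

theorem hasDerivAt_kernelSymbol (hz : z ∈ slitPlane) :
    HasDerivAt (kernelSymbol μ a b) (a * z ^ (a - 1 : ℂ) + μ * (b * z ^ (b - 1 : ℂ))) z :=
  (hasStrictDerivAt_cpow_const hz).hasDerivAt.add
    ((hasStrictDerivAt_cpow_const hz).hasDerivAt.const_mul _)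

theorem hasDerivAt_deriv_kernelSymbol (hz : z ∈ slitPlane) :
    HasDerivAt (fun w : ℂ => a * w ^ (a - 1 : ℂ) + μ * (b * w ^ (b - 1 : ℂ)))
      (a * ((a - 1) * z ^ (a - 1 - 1 : ℂ)) + μ * (b * ((b - 1) * z ^ (b - 1 - 1 : ℂ)))) z :=
  ((hasStrictDerivAt_cpow_const hz).hasDerivAt.const_mul _).add
    (((hasStrictDerivAt_cpow_const hz).hasDerivAt.const_mul _).const_mul _)

theorem norm_mul_deriv_kernelSymbol_le (hμ : 0 ≤ μ) (ha : a ∈ Set.Icc 0 1)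
    (hb : b ∈ Set.Icc 0 1) (hz : 0 < z.re) :
    ‖z * (a * z ^ (a - 1 : ℂ) + μ * (b * z ^ (b - 1 : ℂ)))‖ ≤ ‖kernelSymbol μ a b z‖ := by
  have hz0 : z ≠ 0 := fun h => by simp [h] at hz
  have heuler : z * (a * z ^ (a - 1 : ℂ) + μ * (b * z ^ (b - 1 : ℂ)))
      = a * z ^ (a : ℂ) + b * (μ * z ^ (b : ℂ)) := by
    rw [← mul_cpow_sub_one hz0 a, ← mul_cpow_sub_one hz0 b]
    ring
  rw [heuler]
  exact norm_mul_cpow_add_mul_cpow_le_norm_kernelSymbol hμ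
    (abs_sub_le_of_nonneg_of_le ha.1 ha.2 hb.1 hb.2) hz
    (abs_le.2 ⟨by linarith [ha.1], ha.2⟩) (abs_le.2 ⟨by linarith [hb.1], hb.2⟩)
    (mul_nonneg ha.1 hb.1)

theorem norm_sq_mul_deriv_deriv_kernelSymbol_le (hμ : 0 ≤ μ) (ha : a ∈ Set.Icc 0 1)
    (hb : b ∈ Set.Icc 0 1) (hz : 0 < z.re) :
    ‖z ^ 2 * (a * ((a - 1) * z ^ (a - 1 - 1 : ℂ)) + μ * (b * ((b - 1) * z ^ (b - 1 - 1 : ℂ))))‖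
      ≤ ‖kernelSymbol μ a b z‖ := by
  have hz0 : z ≠ 0 := fun h => by simp [h] at hz
  have heuler : z ^ 2 * (a * ((a - 1) * z ^ (a - 1 - 1 : ℂ))
        + μ * (b * ((b - 1) * z ^ (b - 1 - 1 : ℂ))))
      = ((a * (a - 1) : ℝ) : ℂ) * z ^ (a : ℂ) + ((b * (b - 1) : ℝ) : ℂ) * (μ * z ^ (b : ℂ)) := by
    rw [← mul_cpow_sub_one hz0 a, ← mul_cpow_sub_one hz0 ((a : ℂ) - 1),
      ← mul_cpow_sub_one hz0 b, ← mul_cpow_sub_one hz0 ((b : ℂ) - 1)]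
    push_cast
    ring
  obtain ⟨ha₀, ha₁⟩ := ha
  obtain ⟨hb₀, hb₁⟩ := hb
  rw [heuler]
  exact norm_mul_cpow_add_mul_cpow_le_norm_kernelSymbol hμ
    (abs_sub_le_of_nonneg_of_le ha₀ ha₁ hb₀ hb₁) hz
    (abs_le.2 ⟨by nlinarith, by nlinarith⟩) (abs_le.2 ⟨by nlinarith, by nlinarith⟩)
    (mul_nonneg_of_nonpos_of_nonpos (by nlinarith) (by nlinarith))

end KernelSymbol

theorem kernel_two_regular
    (μ α β : ℝ) (hμ : 0 ≤ μ) (hα : 0 < α) (hαβ : α < β) (hβ : β < 1) :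
    ∀ z : ℂ, 0 < z.re →
      ‖(z * deriv (fun w : ℂ =>
          (w ^ ((1 - α : ℝ) : ℂ) + (μ : ℂ) * w ^ ((1 - β : ℝ) : ℂ))⁻¹) z)‖
        ≤ ‖((z ^ ((1 - α : ℝ) : ℂ) + (μ : ℂ) * z ^ ((1 - β : ℝ) : ℂ))⁻¹)‖ ∧
      ‖(z ^ 2 * deriv (deriv (fun w : ℂ =>
          (w ^ ((1 - α : ℝ) : ℂ) + (μ : ℂ) * w ^ ((1 - β : ℝ) : ℂ))⁻¹)) z)‖
        ≤ 3 * ‖((z ^ ((1 - α : ℝ) : ℂ) + (μ : ℂ) * z ^ ((1 - β : ℝ) : ℂ))⁻¹)‖ := by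
  intro z hz
  have ha : 1 - α ∈ Set.Icc 0 1 := ⟨by linarith, by linarith⟩
  have hb : 1 - β ∈ Set.Icc 0 1 := ⟨by linarith, by linarith⟩
  have hab : |(1 - α) - (1 - β)| ≤ 1 := abs_sub_le_of_nonneg_of_le ha.1 ha.2 hb.1 hb.2
  have hslit : ∀ {w : ℂ}, 0 < w.re → w ∈ slitPlane := fun hw => mem_slitPlane_iff.2 (Or.inl hw)
  have hnear : ∀ᶠ w in 𝓝 z, HasDerivAt (kernelSymbol μ (1 - α) (1 - β))
      (↑(1 - α) * w ^ (↑(1 - α) - 1 : ℂ) + μ * (↑(1 - β) * w ^ (↑(1 - β) - 1 : ℂ))) w ∧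
      kernelSymbol μ (1 - α) (1 - β) w ≠ 0 := by
    filter_upwards [(isOpen_lt continuous_const continuous_re).mem_nhds hz] with w hw
    exact ⟨hasDerivAt_kernelSymbol (hslit hw), kernelSymbol_ne_zero hμ hab hw⟩
  have h₁ := norm_mul_deriv_kernelSymbol_le hμ ha hb hz
  exact ⟨norm_mul_deriv_inv_le (hasDerivAt_kernelSymbol (hslit hz))
      (kernelSymbol_ne_zero hμ hab hz) h₁,
    norm_sq_mul_deriv_deriv_inv_le hnear (hasDerivAt_deriv_kernelSymbol (hslit hz)) h₁
      (norm_sq_mul_deriv_deriv_kernelSymbol_le hμ ha hb hz)⟩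
end
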